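/- Let G be a finite group, H ≤ G a subgroup, and k ∈ ℕ. Then d_k(G) + 1 ≤ [G : H] · (d_k(H) + 1), where [G : H] is the index of H in G. -/

import Mathlib

/-- `S` is a product-one sequence over `G`: some ordering of its terms multiplies to `1`. -/
def IsProductOne {G : Type*} [Group G] (S : Multiset G) : Prop :=
  ∃ l : List G, (l : Multiset G) = S ∧ l.prod = 1

/-- The set of products `π(S)` of all orderings of the terms of `S`. -/
def piSet {G : Type*} [Group G] (S : Multiset G) : Set G :=
  {g | ∃ l : List G, (l : Multiset G) = S ∧ l.prod = g}

/-- The set `Π(S)` of products of nontrivial subsequences of `S`. -/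
def subseqProds {G : Type*} [Group G] (S : Multiset G) : Set G :=
  {g | ∃ T : Multiset G, T ≤ S ∧ T ≠ 0 ∧ g ∈ piSet T}

/-- `S` is product-one free. -/
def ProductOneFree {G : Type*} [Group G] (S : Multiset G) : Prop :=
  (1 : G) ∉ subseqProds S

/-- `S` is an atom of the monoid `B(G)` of product-one sequences: it is a nontrivial
product-one sequence that is not the concatenation of two nontrivial product-one sequences. -/
def IsPOAtom {G : Type*} [Group G] (S : Multiset G) : Prop :=
  IsProductOne S ∧ S ≠ 0 ∧
    ∀ T₁ T₂ : Multiset G, IsProductOne T₁ → IsProductOne T₂ → T₁ + T₂ = S →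
      T₁ = 0 ∨ T₂ = 0

/-- The large Davenport constant `D(G)`: the supremum of lengths of atoms of `B(G)`. -/
noncomputable def largeD (G : Type*) [Group G] : ℕ :=
  sSup {n : ℕ | ∃ S : Multiset G, IsPOAtom S ∧ Multiset.card S = n}

/-- The small Davenport constant `d(G)`: the supremum of lengths of product-one free
sequences over `G`. -/
noncomputable def smalld (G : Type*) [Group G] : ℕ :=
  sSup {n : ℕ | ∃ S : Multiset G, ProductOneFree S ∧ Multiset.card S = n}
/-- `S` is divisible in `F(G)` by a concatenation of `k` nontrivial product-one sequences. -/
def DividesKProducts {G : Type*} [Group G] (k : ℕ) (S : Multiset G) : Prop :=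
  ∃ f : Fin k → Multiset G,
    (∀ i, f i ≠ 0 ∧ IsProductOne (f i)) ∧ (∑ i, f i) ≤ S

/-- The small `k`-th Davenport constant `d_k(G)`. -/
noncomputable def smalldk (G : Type*) [Group G] (k : ℕ) : ℕ :=
  sSup {n : ℕ | ∃ S : Multiset G, ¬ DividesKProducts k S ∧ Multiset.card S = n}

/-- Every factorization of `S` into nontrivial product-one sequences has at most `k` factors. -/
def MaxFactLe {G : Type*} [Group G] (k : ℕ) (S : Multiset G) : Prop :=
  ∀ (m : ℕ) (f : Fin m → Multiset G),
    (∀ i, f i ≠ 0 ∧ IsProductOne (f i)) → (∑ i, f i) = S → m ≤ k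

/-- The large `k`-th Davenport constant `D_k(G)`. -/
noncomputable def largeDk (G : Type*) [Group G] (k : ℕ) : ℕ :=
  sSup {n : ℕ | ∃ S : Multiset G, IsProductOne S ∧ MaxFactLe k S ∧ Multiset.card S = n}

/-!
By the pigeonhole principle applied to the cosets of `H` containing the prefix products of any
ordering, every `[G : H]` terms of a sequence over `G` contain a nonempty subsequence with an
ordering whose product lies in `H`. A sequence `S` of length `[G : H] (d_k(H) + 1)` therefore has
`d_k(H) + 1` disjoint such blocks. Their products form a sequence over `H` of length
`d_k(H) + 1`, which contains `k` disjoint nontrivial product-one subsequences; replacing each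
term by its block turns these into `k` disjoint nontrivial product-one subsequences of `S`.
-/

namespace Multiset

variable {α β : Type*} {φ : α → β}

theorem exists_le_map_eq_of_le_map {s : Multiset β} {u : Multiset α} (h : s ≤ u.map φ) :
    ∃ v ≤ u, v.map φ = s := by
  induction s using Multiset.induction generalizing u with
  | empty => exact ⟨0, zero_le _, map_zero φ⟩
  | cons b s ih =>
    obtain ⟨x, hxu, rfl⟩ := mem_map.mp (mem_of_le h (mem_cons_self b s))
    obtain ⟨u, rfl⟩ := exists_cons_of_mem hxu
    rw [map_cons, cons_le_cons_iff] at h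
    obtain ⟨v, hvu, rfl⟩ := ih h
    exact ⟨x ::ₘ v, cons_le_cons x hvu, map_cons φ x v⟩

theorem exists_sum_le_map_eq_of_sum_le_map {k : ℕ} {f : Fin k → Multiset β} {u : Multiset α}
    (h : ∑ j, f j ≤ u.map φ) :
    ∃ w : Fin k → Multiset α, (∀ j, (w j).map φ = f j) ∧ ∑ j, w j ≤ u := by
  classical
  induction k generalizing u with
  | zero => exact ⟨Fin.elim0, fun j => j.elim0, zero_le _⟩
  | succ k ih =>
    rw [Fin.sum_univ_succ] at h
    obtain ⟨v, hvu, hv⟩ := exists_le_map_eq_of_le_map ((le_add_right _ _).trans h)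
    have hsplit : u.map φ = f 0 + (u - v).map φ := by
      rw [← hv, ← map_add, add_tsub_cancel_of_le hvu]
    rw [hsplit, add_le_add_iff_left] at h
    obtain ⟨w, hw, hwu⟩ := ih h
    refine ⟨Fin.cons v w, Fin.cases hv hw, ?_⟩
    simp only [Fin.sum_univ_succ, Fin.cons_zero, Fin.cons_succ]
    exact (add_le_add_iff_left v).mpr hwu |>.trans_eq (add_tsub_cancel_of_le hvu)

theorem exists_list_of_map_eq_coe {u : Multiset α} {l : List β} (h : u.map φ = l) :
    ∃ l' : List α, (l' : Multiset α) = u ∧ l'.map φ = l := by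
  induction l generalizing u with
  | nil => exact ⟨[], (map_eq_zero.mp h).symm, rfl⟩
  | cons b l ih =>
    obtain ⟨x, hxu, rfl⟩ := mem_map.mp (h ▸ mem_coe.mpr (List.mem_cons_self ..))
    obtain ⟨u, rfl⟩ := exists_cons_of_mem hxu
    rw [map_cons, ← cons_coe, cons_inj_right] at h
    obtain ⟨l', rfl, rfl⟩ := ih h
    exact ⟨x :: l', rfl, rfl⟩

theorem bind_mono {s t : Multiset α} (f : α → Multiset β) (h : s ≤ t) : s.bind f ≤ t.bind f := by
  obtain ⟨u, rfl⟩ := le_iff_exists_add.mp h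
  rw [add_bind]
  exact le_add_right _ _

end Multiset

section

variable {G : Type*} [Group G]

theorem mul_mem_piSet_add {a b : G} {s t : Multiset G} (ha : a ∈ piSet s) (hb : b ∈ piSet t) :
    a * b ∈ piSet (s + t) := by
  obtain ⟨l, rfl, rfl⟩ := ha
  obtain ⟨l', rfl, rfl⟩ := hb
  exact ⟨l ++ l', rfl, List.prod_append⟩

theorem list_prod_map_mem_piSet_bind {ι : Type*} {x : ι → G} {T : ι → Multiset G}
    (hx : ∀ i, x i ∈ piSet (T i)) (l : List ι) :
    (l.map x).prod ∈ piSet ((l : Multiset ι).bind T) := by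
  induction l with
  | nil => exact ⟨[], rfl, rfl⟩
  | cons i l ih =>
    rw [List.map_cons, List.prod_cons, ← Multiset.cons_coe, Multiset.cons_bind]
    exact mul_mem_piSet_add (hx i) ih

theorem DividesKProducts.mono {k : ℕ} {S S' : Multiset G} (h : DividesKProducts k S)
    (hle : S ≤ S') : DividesKProducts k S' :=
  let ⟨f, hf, hfS⟩ := h
  ⟨f, hf, hfS.trans hle⟩

theorem DividesKProducts.bind {H : Subgroup G} {ι : Type*} {k : ℕ} {u : Multiset ι}
    {T : ι → Multiset G} {h : ι → H} (hT : ∀ i, T i ≠ 0 ∧ (h i : G) ∈ piSet (T i))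
    (hdiv : DividesKProducts k (u.map h)) : DividesKProducts k (u.bind T) := by
  obtain ⟨f, hf, hfu⟩ := hdiv
  obtain ⟨w, hw, hwu⟩ := Multiset.exists_sum_le_map_eq_of_sum_le_map hfu
  have hbind_sum : ∑ j, (w j).bind T = (∑ j, w j).bind T :=
    (map_sum (⟨⟨(Multiset.bind · T), Multiset.zero_bind T⟩, fun s t => Multiset.add_bind s t T⟩ :
      Multiset ι →+ Multiset G) w Finset.univ).symm
  refine ⟨fun j => (w j).bind T, fun j => ⟨?_, ?_⟩, ?_⟩
  · have hwj : w j ≠ 0 := fun h0 => (hf j).1 (by rw [← hw j, h0, Multiset.map_zero])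
    obtain ⟨i, hi⟩ := Multiset.exists_mem_of_ne_zero hwj
    exact ne_bot_of_le_ne_bot (hT i).1 (Multiset.le_bind _ hi)
  · obtain ⟨l, hl, hprod⟩ := (hf j).2
    obtain ⟨l', hl'w, hl'⟩ := Multiset.exists_list_of_map_eq_coe ((hw j).trans hl.symm)
    show 1 ∈ piSet ((w j).bind T)
    rw [← hl'w]
    have := list_prod_map_mem_piSet_bind (fun i => (hT i).2) l'
    rwa [show l'.map (fun i => (h i : G)) = (l'.map h).map H.subtype from (List.map_map ..).symm,
      ← map_list_prod, hl', hprod, map_one] at this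
  · exact hbind_sum ▸ Multiset.bind_mono T hwu

theorem exists_le_card_le_index_prod_mem (H : Subgroup G) [H.FiniteIndex] (S : Multiset G)
    (hS : H.index ≤ Multiset.card S) :
    ∃ T ≤ S, T ≠ 0 ∧ Multiset.card T ≤ H.index ∧ ∃ g ∈ piSet T, g ∈ H := by
  obtain ⟨l, rfl⟩ : ∃ l : List G, (l : Multiset G) = S := ⟨S.toList, S.coe_toList⟩
  have := Fintype.ofFinite (G ⧸ H)
  -- two of the `[G : H] + 1` prefix products `(l.take i).prod` lie in the same coset
  obtain ⟨i, j, hij, hcoset⟩ := Fintype.exists_ne_map_eq_of_card_lt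
    (fun i : Fin (H.index + 1) => ((l.take i).prod : G ⧸ H))
    (by rw [Fintype.card_fin, ← Nat.card_eq_fintype_card]; exact Nat.lt_succ_self _)
  obtain ⟨a, b, hab, hb, hmem⟩ :
      ∃ a b : ℕ, a < b ∧ b ≤ H.index ∧ (l.take a).prod⁻¹ * (l.take b).prod ∈ H := by
    rcases Nat.lt_or_gt_of_ne (Fin.val_ne_of_ne hij) with h | h
    · exact ⟨i, j, h, j.is_le, QuotientGroup.eq.mp hcoset⟩
    · exact ⟨j, i, h, i.is_le, QuotientGroup.eq.mp hcoset.symm⟩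
  have hprod : ((l.drop a).take (b - a)).prod = (l.take a).prod⁻¹ * (l.take b).prod := by
    conv_rhs => rw [← Nat.add_sub_cancel' hab.le, List.take_add, List.prod_append,
      inv_mul_cancel_left]
  have hlen : ((l.drop a).take (b - a)).length = b - a := by
    rw [Multiset.coe_card] at hS
    simp only [List.length_take, List.length_drop]
    omega
  refine ⟨(l.drop a).take (b - a),
    Multiset.coe_le.mpr ((List.take_sublist _ _).trans (List.drop_sublist _ _)).subperm,
    fun h0 => ?_, ?_, _, ⟨_, rfl, rfl⟩, hprod ▸ hmem⟩
  · have := congrArg Multiset.card h0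
    rw [Multiset.coe_card, hlen, Multiset.card_zero] at this
    omega
  · rw [Multiset.coe_card, hlen]
    omega

theorem exists_blocks_of_index_mul_le (H : Subgroup G) [H.FiniteIndex] (m : ℕ) (S : Multiset G)
    (hS : H.index * m ≤ Multiset.card S) :
    ∃ (T : Fin m → Multiset G) (h : Fin m → H),
      (∀ i, T i ≠ 0 ∧ (h i : G) ∈ piSet (T i)) ∧ ∑ i, T i ≤ S := by
  classical
  induction m generalizing S with
  | zero => exact ⟨Fin.elim0, Fin.elim0, fun i => i.elim0, by simp⟩
  | succ m ih =>
    rw [mul_add_one] at hS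
    obtain ⟨T₀, hT₀S, hT₀, hcard, g₀, hg₀, hg₀H⟩ :=
      exists_le_card_le_index_prod_mem H S (le_of_add_le_right hS)
    obtain ⟨T, h, hTh, hTS⟩ := ih (S - T₀) (by rw [Multiset.card_sub hT₀S]; omega)
    refine ⟨Fin.cons T₀ T, Fin.cons ⟨g₀, hg₀H⟩ h, Fin.cases ⟨hT₀, hg₀⟩ hTh, ?_⟩
    simp only [Fin.sum_univ_succ, Fin.cons_zero, Fin.cons_succ]
    exact (add_le_add_iff_left T₀).mpr hTS |>.trans_eq (add_tsub_cancel_of_le hT₀S)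

theorem dividesKProducts_of_index_mul_le (H : Subgroup G) [H.FiniteIndex] {k m : ℕ}
    (hH : ∀ T : Multiset H, Multiset.card T = m → DividesKProducts k T) {S : Multiset G}
    (hS : H.index * m ≤ Multiset.card S) : DividesKProducts k S := by
  obtain ⟨T, h, hTh, hTS⟩ := exists_blocks_of_index_mul_le H m S hS
  exact ((hH (Finset.univ.val.map h) (by simp)).bind hTh).mono hTS

theorem bddAbove_card_not_dividesKProducts [Finite G] (k : ℕ) :
    BddAbove {n | ∃ S : Multiset G, ¬ DividesKProducts k S ∧ Multiset.card S = n} := by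
  refine ⟨Nat.card G * k, ?_⟩
  rintro _ ⟨S, hS, rfl⟩
  by_contra hlt
  obtain ⟨T, h, hTh, hTS⟩ :=
    exists_blocks_of_index_mul_le (⊥ : Subgroup G) k S (by rw [Subgroup.index_bot]; omega)
  refine hS ⟨T, fun i => ⟨(hTh i).1, ?_⟩, hTS⟩
  have := (hTh i).2
  rwa [Subgroup.mem_bot.mp (h i).2] at this

theorem dividesKProducts_of_smalldk_lt [Finite G] {k : ℕ} {S : Multiset G}
    (h : smalldk G k < Multiset.card S) : DividesKProducts k S := by
  by_contra hS
  exact h.not_ge (le_csSup (bddAbove_card_not_dividesKProducts k) ⟨S, hS, rfl⟩)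

theorem smalldk_le {k n : ℕ}
    (h : ∀ S : Multiset G, ¬ DividesKProducts k S → Multiset.card S ≤ n) : smalldk G k ≤ n :=
  csSup_le' fun _ ⟨S, hS, hn⟩ => hn ▸ h S hS

end

theorem stmt11_general {G : Type*} [Group G] [Finite G] (H : Subgroup G) (k : ℕ) :
    smalldk G k + 1 ≤ H.index * (smalldk ↥H k + 1) := by
  have hH : ∀ T : Multiset H, Multiset.card T = smalldk H k + 1 → DividesKProducts k T :=
    fun T hT => dividesKProducts_of_smalldk_lt (by omega)
  have hpos : 0 < H.index * (smalldk H k + 1) :=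
    Nat.mul_pos (Nat.pos_of_ne_zero H.index_ne_zero_of_finite) (Nat.succ_pos _)
  suffices smalldk G k ≤ H.index * (smalldk H k + 1) - 1 by omega
  refine smalldk_le fun S hS => ?_
  by_contra hlt
  exact hS (dividesKProducts_of_index_mul_le H hH (by omega))

/-- For a subgroup `H` of a finite group `G` and `k ≥ 1`,
`d_k(G) + 1 ≤ [G : H] · (d_k(H) + 1)`. -/
theorem stmt11 {G : Type*} [Group G] [Finite G] (H : Subgroup G) (k : ℕ) (hk : 1 ≤ k) :
    smalldk G k + 1 ≤ H.index * (smalldk ↥H k + 1) :=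
  stmt11_general H k
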